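/- Let U be a regular subgroup of G contained in S_h × S_n × {id}, let (p^j)_{j ∈ P^U} be a system of representatives of the U-orbits of P, let C be a U-consistent social choice correspondence, and for each U-orbit j choose x_j ∈ C(p^j). Then there exists a unique resolute U-consistent refinement f of C such that f(p^j) = {x_j} for every U-orbit j. -/
import Mathlib


/-!
Common framework: preferences on `n ≥ 2` alternatives (`Fin n`) expressed by `h ≥ 2`
individuals (`Fin h`).  Following the paper, a linear order `q ∈ L(N)` is identified with
the permutation of `Fin n` sending each rank position (`0` = best) to the alternative
occupying that position.
-/

/-- A preference relation (a linear order on the set `Fin n` of alternatives), identified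
with the permutation sending each rank position (`0` = best) to the alternative at
that position. -/
abbrev Pref (n : ℕ) := Equiv.Perm (Fin n)

/-- `x ⪰_q y` : alternative `x` is weakly preferred to `y` in `q`. -/
def prefGE {n : ℕ} (q : Pref n) (x y : Fin n) : Prop := q.symm x ≤ q.symm y

/-- `x ≻_q y` : alternative `x` is strictly preferred to `y` in `q`. -/
def prefGT {n : ℕ} (q : Pref n) (x y : Fin n) : Prop := q.symm x < q.symm y

instance {n : ℕ} (q : Pref n) (x y : Fin n) : Decidable (prefGT q x y) :=
  inferInstanceAs (Decidable (q.symm x < q.symm y))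

/-- A preference profile: one preference relation for each individual. -/
abbrev Profile (n h : ℕ) := Fin h → Pref n

/-- A social choice correspondence (the nonemptiness of its values is `IsSCC`). -/
abbrev SCC (n h : ℕ) := Profile n h → Set (Fin n)

/-- `C` has nonempty values, i.e. `C` really is a social choice correspondence. -/
def IsSCC {n h : ℕ} (C : SCC n h) : Prop := ∀ p, (C p).Nonempty

/-- `C` is resolute: it always selects exactly one alternative. -/
def Resolute {n h : ℕ} (C : SCC n h) : Prop := ∀ p, ∃ x, C p = {x}

/-- `C'` is a refinement of `C`. -/
def Refines {n h : ℕ} (C' C : SCC n h) : Prop := ∀ p, C' p ⊆ C p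

/-- The order-reversing permutation `ρ₀ : r ↦ n - r + 1`. -/
def rho0 (n : ℕ) : Equiv.Perm (Fin n) := Fin.revPerm

/-- The profile `p^{(id,id,ρ₀)}` obtained from `p` by reversing every individual
preference. -/
def revProfile {n h : ℕ} (p : Profile n h) : Profile n h := fun i => p i * rho0 n

/-- `C` is immune to the reversal bias. -/
def Immune {n h : ℕ} (C : SCC n h) : Prop :=
  ∀ (p : Profile n h) (x : Fin n), C p = {x} → C (revProfile p) ≠ C p

/-- `Y` is a partition: nonempty, pairwise disjoint, covering blocks. -/
def IsPartition {α : Type*} {s : ℕ} (Y : Fin s → Finset α) : Prop :=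
  (∀ j, (Y j).Nonempty) ∧ (∀ j k, j ≠ k → Disjoint (Y j) (Y k)) ∧ (∀ a, ∃ j, a ∈ Y j)

/-- The ambient group `S_h × S_n × S_n` (the third component is meant to range in `Ω`). -/
abbrev Amb (n h : ℕ) := Equiv.Perm (Fin h) × Equiv.Perm (Fin n) × Equiv.Perm (Fin n)

/-- The action `p ↦ p^g` of `g = (φ,ψ,ρ)` on profiles. -/
def gact {n h : ℕ} (g : Amb n h) (p : Profile n h) : Profile n h :=
  fun i => g.2.1 * p (g.1⁻¹ i) * g.2.2

/-- The group `Ω = {id, ρ₀}`. -/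
def OmegaGrp (n : ℕ) : Subgroup (Equiv.Perm (Fin n)) := Subgroup.zpowers (rho0 n)

/-- The group `G = S_h × S_n × Ω`. -/
def bigG (n h : ℕ) : Subgroup (Amb n h) :=
  (⊤ : Subgroup (Equiv.Perm (Fin h))).prod
    ((⊤ : Subgroup (Equiv.Perm (Fin n))).prod (OmegaGrp n))

/-- `U`-consistency of a social choice correspondence `C`: for every `p` and every
`(φ,ψ,ρ) ∈ U`, if `ρ = id` then `C(p^{(φ,ψ,id)}) = ψ C(p)`, and if `ρ = ρ₀` and
`|C(p)| = 1` then `C(p^{(φ,ψ,ρ₀)}) ≠ ψ C(p)`. -/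
def UConsistent {n h : ℕ} (U : Subgroup (Amb n h)) (C : SCC n h) : Prop :=
  ∀ (p : Profile n h), ∀ g ∈ U,
    (g.2.2 = 1 → C (gact g p) = g.2.1 '' C p) ∧
    (g.2.2 = rho0 n → ∀ x : Fin n, C p = {x} → C (gact g p) ≠ g.2.1 '' C p)

/-- A subgroup `U` of `G` is regular: for every profile `p` there is `ψ⋆ ∈ S_n`
conjugate to `ρ₀` with `Stab_U(p) ⊆ (S_h × {id} × {id}) ∪ (S_h × {ψ⋆} × {ρ₀})`. -/
def RegularSubgroup {n h : ℕ} (U : Subgroup (Amb n h)) : Prop :=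
  ∀ p : Profile n h, ∃ ψs : Equiv.Perm (Fin n), IsConj (rho0 n) ψs ∧
    ∀ g ∈ U, gact g p = p →
      (g.2.1 = 1 ∧ g.2.2 = 1) ∨ (g.2.1 = ψs ∧ g.2.2 = rho0 n)

/-- `p` and `q` lie in the same `U`-orbit. -/
def SameOrbit {n h : ℕ} (U : Subgroup (Amb n h)) (p q : Profile n h) : Prop :=
  ∃ g ∈ U, gact g p = q

/-- `S` is a system of representatives of the `U`-orbits: every profile is in the
orbit of exactly one element of `S`. -/
def IsRepSystem {n h : ℕ} (U : Subgroup (Amb n h)) (S : Set (Profile n h)) : Prop :=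
  ∀ p : Profile n h, ∃! r, r ∈ S ∧ SameOrbit U r p

/-- The stabilizer of `r` in `U` is contained in `S_h × S_n × {id}` (i.e. the
`U`-orbit of `r` belongs to `P₁ᵁ`). -/
def StabIn1 {n h : ℕ} (U : Subgroup (Amb n h)) (r : Profile n h) : Prop :=
  ∀ g ∈ U, gact g r = r → g.2.2 = 1

lemma gact_gact {n h : ℕ} (g k : Amb n h) (hg : g.2.2 = 1) (hk : k.2.2 = 1)
    (p : Profile n h) : gact g (gact k p) = gact (g * k) p := by
  funext i
  simp [gact, hg, hk, mul_assoc, Prod.snd_mul, Prod.fst_mul, mul_inv_rev,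
    Equiv.Perm.mul_apply]

lemma gact_one {n h : ℕ} (p : Profile n h) : gact 1 p = p := by
  funext i; simp [gact]

lemma rho0_ne_one {n : ℕ} (hn : 2 ≤ n) : rho0 n ≠ 1 := by
  intro h1
  have := Equiv.ext_iff.mp h1 ⟨0, by omega⟩
  simp only [rho0, Fin.revPerm_apply, Equiv.Perm.one_apply, Fin.rev] at this
  have := congrArg Fin.val this
  simp at this
  omega

/-- Proposition `f-fu`: given a regular `U ≤ S_h × S_n × {id}`, a system
of representatives of the `U`-orbits, a `U`-consistent scc `C` and a choice
`x r ∈ C r` for each representative `r`, there is a unique resolute `U`-consistent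
refinement `f` of `C` with `f r = {x r}` for each representative `r`. -/
theorem statement10 {n h : ℕ} (hh : 2 ≤ h) (hn : 2 ≤ n)
    (U : Subgroup (Amb n h)) (hreg : RegularSubgroup U)
    (hU1 : ∀ g ∈ U, g.2.2 = 1)
    (S : Set (Profile n h)) (hS : IsRepSystem U S)
    (C : SCC n h) (hC : IsSCC C) (hcons : UConsistent U C)
    (x : Profile n h → Fin n) (hx : ∀ r ∈ S, x r ∈ C r) :
    ∃! f : SCC n h,
      Resolute f ∧ Refines f C ∧ UConsistent U f ∧ ∀ r ∈ S, f r = {x r} := by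
  classical
  have hrho : rho0 n ≠ 1 := rho0_ne_one hn
  -- choose a representative and a group element for each profile
  have hrep : ∀ p : Profile n h, ∃ r, ∃ g, (r ∈ S ∧ g ∈ U) ∧ gact g r = p := by
    intro p
    obtain ⟨r, ⟨hrS, g, hgU, hg⟩, -⟩ := hS p
    exact ⟨r, g, ⟨hrS, hgU⟩, hg⟩
  choose R G hmem hG using hrep
  have hRS : ∀ p, R p ∈ S := fun p => (hmem p).1
  have hGU : ∀ p, G p ∈ U := fun p => (hmem p).2
  -- key: well-definedness
  have key : ∀ (p r : Profile n h) (g : Amb n h), r ∈ S → g ∈ U → gact g r = p →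
      r = R p ∧ g.2.1 (x r) = (G p).2.1 (x (R p)) := by
    intro p r g hrS hgU hg
    have horb1 : r ∈ S ∧ SameOrbit U r p := ⟨hrS, g, hgU, hg⟩
    have horb2 : R p ∈ S ∧ SameOrbit U (R p) p := ⟨hRS p, G p, hGU p, hG p⟩
    obtain ⟨r', -, huniq⟩ := hS p
    have hreq : r = R p := (huniq r horb1).trans (huniq (R p) horb2).symm
    refine ⟨hreq, ?_⟩
    -- stabilizer argument
    have hginvU : g⁻¹ ∈ U := inv_mem hgU
    have hkU : g⁻¹ * G p ∈ U := mul_mem hginvU (hGU p)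
    have hg22 : g.2.2 = 1 := hU1 g hgU
    have hginv22 : (g⁻¹).2.2 = 1 := by
      have : (g⁻¹).2.2 = (g.2.2)⁻¹ := rfl
      rw [this, hg22]; simp
    have e1 : gact g⁻¹ p = R p := by
      rw [← hreq, ← hg, gact_gact _ _ hginv22 hg22, inv_mul_cancel, gact_one]
    have hstab : gact (g⁻¹ * G p) (R p) = R p := by
      calc gact (g⁻¹ * G p) (R p)
          = gact g⁻¹ (gact (G p) (R p)) :=
            (gact_gact _ _ hginv22 (hU1 _ (hGU p)) _).symm
        _ = gact g⁻¹ p := by rw [hG p]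
        _ = R p := e1
    obtain ⟨ψs, -, hψ⟩ := hreg (R p)
    rcases hψ _ hkU hstab with ⟨h1, -⟩ | ⟨-, h2⟩
    · have h1' : (g.2.1)⁻¹ * (G p).2.1 = 1 := h1
      have h1'' := congrArg (fun z => g.2.1 * z) h1'
      simp [← mul_assoc] at h1''
      rw [hreq, h1'']
    · exact absurd ((hU1 _ hkU).symm.trans h2) (fun e => hrho e.symm)
  -- define f
  set f : SCC n h := fun p => {(G p).2.1 (x (R p))} with hf
  have hfval : ∀ (p r : Profile n h) (g : Amb n h), r ∈ S → g ∈ U → gact g r = p →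
      f p = {g.2.1 (x r)} := by
    intro p r g hrS hgU hg
    obtain ⟨h1, h2⟩ := key p r g hrS hgU hg
    simp [hf, ← h2, h1]
  have hres : Resolute f := fun p => ⟨_, rfl⟩
  have href : Refines f C := by
    intro p y hy
    simp only [hf, Set.mem_singleton_iff] at hy
    have hCp : C p = (G p).2.1 '' C (R p) := by
      have h0 := (hcons (R p) (G p) (hGU p)).1 (hU1 _ (hGU p))
      rw [hG p] at h0
      exact h0
    rw [hCp, hy]
    exact ⟨x (R p), hx _ (hRS p), rfl⟩
  have hfcons : UConsistent U f := by
    intro p g hgU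
    constructor
    · intro hg22
      have hGpU := hGU p
      have hgGU : g * G p ∈ U := mul_mem hgU hGpU
      have hact : gact (g * G p) (R p) = gact g p := by
        rw [← gact_gact _ _ hg22 (hU1 _ hGpU), hG p]
      rw [hfval (gact g p) (R p) (g * G p) (hRS p) hgGU hact]
      have h21 : (g * G p).2.1 = g.2.1 * (G p).2.1 := rfl
      rw [h21]
      simp [hf]
    · intro hg22
      exact absurd ((hU1 g hgU).symm.trans hg22) (fun e => hrho e.symm)
  have hfr : ∀ r ∈ S, f r = {x r} := by
    intro r hrS
    have := hfval r r 1 hrS (one_mem U) (gact_one r)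
    simpa using this
  refine ⟨f, ⟨hres, href, hfcons, hfr⟩, ?_⟩
  -- uniqueness
  rintro f' ⟨hres', href', hcons', hfr'⟩
  funext p
  have hg22 : (G p).2.2 = 1 := hU1 _ (hGU p)
  have hstep : f' p = (G p).2.1 '' f' (R p) := by
    have h0 := (hcons' (R p) (G p) (hGU p)).1 hg22
    rw [hG p] at h0
    exact h0
  rw [hstep, hfr' (R p) (hRS p)]
  simp [hf]
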